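/- Let c = 2√2 − 2 and r = (3 − 2√2)/2, and let A = ⋃_{p∈(cℤ)²} B(p, r) be the union of the open disks of radius r centered at the points of the scaled integer lattice (cℤ)² ⊆ ℝ². Then: (i) A is a 1-avoiding set; (ii) any two points lying in disks centered at adjacent lattice points (lattice points at distance c) are at distance less than 1, while any two points lying in disks centered at distinct nonadjacent lattice points are at distance greater than 1; (iii) A has density πr²/c² > 0; and (iv) A does not have block structure. -/

import Mathlib

open MeasureTheory Filter Metric Set Pointwise
open scoped RealInnerProductSpace

noncomputable section

/-- The cube `[p - r, p + r]^n` in `ℝ^n`. -/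
def cube (n : ℕ) (p : EuclideanSpace ℝ (Fin n)) (r : ℝ) : Set (EuclideanSpace ℝ (Fin n)) :=
  {x | ∀ i, |x i - p i| ≤ r}

/-- Upper density of a (not necessarily measurable) subset of `ℝ^n`; `volume` applied to an
arbitrary set is the Lebesgue outer measure. -/
def upperDensity {n : ℕ} (A : Set (EuclideanSpace ℝ (Fin n))) : ℝ :=
  limsup (fun r : ℝ => (volume (A ∩ cube n 0 r)).toReal / (2 * r) ^ n) atTop

/-- `A` has density `d`. -/
def HasDensity {n : ℕ} (A : Set (EuclideanSpace ℝ (Fin n))) (d : ℝ) : Prop :=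
  ∀ p, Tendsto (fun r : ℝ => (volume (A ∩ cube n p r)).toReal / (2 * r) ^ n) atTop (nhds d)

/-- `A` avoids distance `1`. -/
def Avoids1 {n : ℕ} (A : Set (EuclideanSpace ℝ (Fin n))) : Prop :=
  ∀ x ∈ A, ∀ y ∈ A, dist x y ≠ 1

/-- `m_1(ℝ^n)`: the supremum of upper densities of measurable 1-avoiding sets. -/
def m1 (n : ℕ) : ℝ :=
  sSup {d | ∃ A : Set (EuclideanSpace ℝ (Fin n)),
    MeasurableSet A ∧ Avoids1 A ∧ upperDensity A = d}

/-- Independence number of the graph with adjacency relation `adj` on vertex set `V`. -/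
def indepNum {β : Type*} (adj : β → β → Prop) (V : Set β) : ℕ :=
  sSup {k | ∃ s : Finset β, ↑s ⊆ V ∧ (∀ x ∈ s, ∀ y ∈ s, x ≠ y → ¬ adj x y) ∧ s.card = k}

/-- `A` is a union of blocks: points in the same block are at distance `< 1`, points in
distinct blocks at distance `> 1`. -/
def HasBlockStructure {n : ℕ} (A : Set (EuclideanSpace ℝ (Fin n))) : Prop :=
  ∃ B : ℕ → Set (EuclideanSpace ℝ (Fin n)),
    A = (⋃ i, B i) ∧
    (∀ i, ∀ x ∈ B i, ∀ y ∈ B i, dist x y < 1) ∧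
    (∀ i j, i ≠ j → ∀ x ∈ B i, ∀ y ∈ B j, 1 < dist x y)

/-- A fixed unit vector in `ℝ^n` (junk value for `n = 0`). -/
def unitVec (n : ℕ) : EuclideanSpace ℝ (Fin n) :=
  if h : n = 0 then 0 else EuclideanSpace.single ⟨0, Nat.pos_of_ne_zero h⟩ 1

/-- `Ω_n(t)`: the average over the unit sphere `S^{n-1}` of `ξ ↦ cos (t ⟪ξ, e⟫)` for a fixed
unit vector `e`; the measure `volume.toSphere` is rotation invariant, hence proportional to the
surface measure, so the average agrees with the surface-measure average. -/
def Omega (n : ℕ) (t : ℝ) : ℝ :=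
  ⨍ ξ : sphere (0 : EuclideanSpace ℝ (Fin n)) 1,
    Real.cos (t * ⟪(ξ : EuclideanSpace ℝ (Fin n)), unitVec n⟫) ∂(volume.toSphere)

open scoped Classical in
/-- Sum of `f (x - y)` over unordered pairs `{x, y}` of distinct points of `C`
(for `f` invariant under negation this equals the sum over `(C choose 2)`). -/
def pairSum {n : ℕ} (C : Finset (EuclideanSpace ℝ (Fin n)))
    (f : EuclideanSpace ℝ (Fin n) → ℝ) : ℝ :=
  (∑ p ∈ C.offDiag, f (p.1 - p.2)) / 2


/-- `c = 2√2 - 2`. -/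
def latC : ℝ := 2 * Real.sqrt 2 - 2

/-- `r = (3 - 2√2)/2`. -/
def latR : ℝ := (3 - 2 * Real.sqrt 2) / 2

/-- The scaled integer lattice `(cℤ)² ⊆ ℝ²`. -/
def sqLattice : Set (EuclideanSpace ℝ (Fin 2)) :=
  {p | ∃ a b : ℤ,
    p = (latC * a) • EuclideanSpace.single (0 : Fin 2) (1 : ℝ) +
        (latC * b) • EuclideanSpace.single (1 : Fin 2) (1 : ℝ)}

/-- The union of the open disks of radius `r` centered at the points of `(cℤ)²`. -/
def sqDisks : Set (EuclideanSpace ℝ (Fin 2)) := ⋃ p ∈ sqLattice, ball p latR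


section Helpers

lemma sqrt2_sq : Real.sqrt 2 ^ 2 = 2 := Real.sq_sqrt (by norm_num)
lemma sqrt2_lt : Real.sqrt 2 < 1.415 := by nlinarith [sqrt2_sq, Real.sqrt_nonneg 2]
lemma sqrt2_gt : (1.414:ℝ) < Real.sqrt 2 := by nlinarith [sqrt2_sq, Real.sqrt_nonneg 2]
lemma latC_pos : 0 < latC := by unfold latC; nlinarith [sqrt2_gt]
lemma latR_pos : 0 < latR := by unfold latR; nlinarith [sqrt2_lt]
lemma latC_add_2latR : latC + 2 * latR = 1 := by unfold latC latR; ring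
lemma two_latR_lt_latC : 2 * latR < latC := by unfold latC latR; nlinarith [sqrt2_gt]
lemma latC_lt_one : latC < 1 := by unfold latC; nlinarith [sqrt2_lt]
lemma sqrt2_latC : Real.sqrt 2 * latC - 2 * latR = 1 := by unfold latC latR; nlinarith [sqrt2_sq]

/-- The lattice point `(c a, c b)`. -/
def latPt (a b : ℤ) : EuclideanSpace ℝ (Fin 2) :=
  (latC * a) • EuclideanSpace.single (0 : Fin 2) (1 : ℝ) +
  (latC * b) • EuclideanSpace.single (1 : Fin 2) (1 : ℝ)

lemma mem_sqLattice (p : EuclideanSpace ℝ (Fin 2)) :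
    p ∈ sqLattice ↔ ∃ a b : ℤ, p = latPt a b := Iff.rfl

lemma latPt_mem : ∀ a b : ℤ, latPt a b ∈ sqLattice := fun a b => ⟨a, b, rfl⟩

lemma latPt_apply0 (a b : ℤ) : latPt a b 0 = latC * a := by
  simp [latPt, EuclideanSpace.single_apply]
lemma latPt_apply1 (a b : ℤ) : latPt a b 1 = latC * b := by
  simp [latPt, EuclideanSpace.single_apply]

lemma dist_coord (x y : EuclideanSpace ℝ (Fin 2)) :
    dist x y = Real.sqrt ((x 0 - y 0)^2 + (x 1 - y 1)^2) := by
  rw [EuclideanSpace.dist_eq]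
  simp [Fin.sum_univ_two, Real.dist_eq, sq_abs]

lemma abs_coord_le_dist (x y : EuclideanSpace ℝ (Fin 2)) (i : Fin 2) :
    |x i - y i| ≤ dist x y := by
  rw [dist_coord]
  fin_cases i <;> simp only [Fin.zero_eta, Fin.mk_one, Fin.isValue] <;>
    rw [← Real.sqrt_sq_eq_abs] <;>
    exact Real.sqrt_le_sqrt (by nlinarith [sq_nonneg (x 1 - y 1), sq_nonneg (x 0 - y 0)])

lemma dist_latPt_sq (a b a' b' : ℤ) :
    dist (latPt a b) (latPt a' b') ^ 2 =
      latC ^ 2 * (((a - a' : ℤ) : ℝ)^2 + ((b - b' : ℤ) : ℝ)^2) := by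
  rw [dist_coord, Real.sq_sqrt (by positivity)]
  rw [latPt_apply0, latPt_apply1, latPt_apply0, latPt_apply1]
  push_cast; ring

lemma int_two_le {m n : ℤ} (h : ¬(m = 0 ∧ n = 0)) (h1 : m^2 + n^2 ≠ 1) :
    2 ≤ m^2 + n^2 := by
  have hm := sq_nonneg m
  have hn := sq_nonneg n
  have h0 : m^2 + n^2 ≠ 0 := by
    intro h0
    exact h ⟨by nlinarith, by nlinarith⟩
  omega

lemma far_lattice {p q : EuclideanSpace ℝ (Fin 2)} (hp : p ∈ sqLattice)
    (hq : q ∈ sqLattice) (hne : p ≠ q) (hd : dist p q ≠ latC) :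
    Real.sqrt 2 * latC ≤ dist p q := by
  obtain ⟨a, b, rfl⟩ := (mem_sqLattice p).mp hp
  obtain ⟨a', b', rfl⟩ := (mem_sqLattice q).mp hq
  have hsq := dist_latPt_sq a b a' b'
  have hmn : ¬(a - a' = 0 ∧ b - b' = 0) := by
    rintro ⟨h1, h2⟩
    exact hne (by rw [show a = a' by omega, show b = b' by omega])
  have h1 : (a - a')^2 + (b - b')^2 ≠ 1 := by
    intro h1
    apply hd
    have : dist (latPt a b) (latPt a' b') ^ 2 = latC ^ 2 := by
      rw [hsq]
      have : (((a - a' : ℤ) : ℝ)^2 + ((b - b' : ℤ) : ℝ)^2) = 1 := by exact_mod_cast h1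
      rw [this]; ring
    calc dist (latPt a b) (latPt a' b')
        = Real.sqrt (dist (latPt a b) (latPt a' b') ^ 2) := (Real.sqrt_sq dist_nonneg).symm
      _ = Real.sqrt (latC ^ 2) := by rw [this]
      _ = latC := Real.sqrt_sq latC_pos.le
  have h2 : (2:ℤ) ≤ (a - a')^2 + (b - b')^2 := int_two_le hmn h1
  have h2' : (2:ℝ) ≤ (((a - a' : ℤ) : ℝ)^2 + ((b - b' : ℤ) : ℝ)^2) := by exact_mod_cast h2
  have hsq2 : (Real.sqrt 2 * latC)^2 ≤ dist (latPt a b) (latPt a' b') ^ 2 := by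
    rw [hsq]
    nlinarith [sqrt2_sq, latC_pos]
  have hnn : (0:ℝ) ≤ Real.sqrt 2 * latC := mul_nonneg (Real.sqrt_nonneg 2) latC_pos.le
  calc Real.sqrt 2 * latC = Real.sqrt ((Real.sqrt 2 * latC) ^ 2) := (Real.sqrt_sq hnn).symm
    _ ≤ Real.sqrt (dist (latPt a b) (latPt a' b') ^ 2) := Real.sqrt_le_sqrt hsq2
    _ = dist (latPt a b) (latPt a' b') := Real.sqrt_sq dist_nonneg

lemma adj_lt_one {p q : EuclideanSpace ℝ (Fin 2)} (hpq : dist p q = latC)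
    {x y : EuclideanSpace ℝ (Fin 2)} (hx : x ∈ ball p latR) (hy : y ∈ ball q latR) :
    dist x y < 1 := by
  rw [mem_ball] at hx hy
  calc dist x y ≤ dist x p + dist p q + dist q y := dist_triangle4 x p q y
    _ < latR + latC + latR := by rw [dist_comm q y]; linarith
    _ = 1 := by linarith [latC_add_2latR]

lemma nonadj_gt_one {p q : EuclideanSpace ℝ (Fin 2)} (hp : p ∈ sqLattice)
    (hq : q ∈ sqLattice) (hne : p ≠ q) (hpq : dist p q ≠ latC)
    {x y : EuclideanSpace ℝ (Fin 2)} (hx : x ∈ ball p latR) (hy : y ∈ ball q latR) :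
    1 < dist x y := by
  rw [mem_ball] at hx hy
  have h := far_lattice hp hq hne hpq
  have h4 : dist p q ≤ dist x p + dist x y + dist y q := by
    have := dist_triangle4 p x y q
    rwa [dist_comm p x] at this
  have := sqrt2_latC
  linarith

lemma mem_sqDisks {x : EuclideanSpace ℝ (Fin 2)} :
    x ∈ sqDisks ↔ ∃ p ∈ sqLattice, x ∈ ball p latR := by
  simp [sqDisks]

lemma sqDisks_avoids : Avoids1 sqDisks := by
  intro x hx y hy
  obtain ⟨p, hp, hxp⟩ := mem_sqDisks.mp hx
  obtain ⟨q, hq, hyq⟩ := mem_sqDisks.mp hy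
  by_cases hpq : p = q
  · subst hpq
    rw [mem_ball] at hxp hyq
    have : dist x y < 1 := by
      calc dist x y ≤ dist x p + dist p y := dist_triangle x p y
        _ < latR + latR := by rw [dist_comm p y]; linarith
        _ < 1 := by linarith [two_latR_lt_latC, latC_lt_one]
    exact this.ne
  · by_cases hd : dist p q = latC
    · exact (adj_lt_one hd hxp hyq).ne
    · exact (nonadj_gt_one hp hq hpq hd hxp hyq).ne'

lemma dist_latPt_row (k k' : ℤ) :
    dist (latPt k 0) (latPt k' 0) = latC * |((k - k' : ℤ) : ℝ)| := by
  have h := dist_latPt_sq k 0 k' 0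
  have h2 : dist (latPt k 0) (latPt k' 0) ^ 2 = (latC * |((k - k' : ℤ) : ℝ)|) ^ 2 := by
    rw [h, mul_pow, sq_abs]; push_cast; ring
  have hnn : (0:ℝ) ≤ latC * |((k - k' : ℤ) : ℝ)| := mul_nonneg latC_pos.le (abs_nonneg _)
  calc dist (latPt k 0) (latPt k' 0)
      = Real.sqrt (dist (latPt k 0) (latPt k' 0) ^ 2) := (Real.sqrt_sq dist_nonneg).symm
    _ = Real.sqrt ((latC * |((k - k' : ℤ) : ℝ)|) ^ 2) := by rw [h2]
    _ = latC * |((k - k' : ℤ) : ℝ)| := Real.sqrt_sq hnn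

lemma latPt_mem_disks (a b : ℤ) : latPt a b ∈ sqDisks :=
  mem_sqDisks.mpr ⟨latPt a b, latPt_mem a b, mem_ball_self latR_pos⟩

lemma sqDisks_no_block : ¬ HasBlockStructure sqDisks := by
  rintro ⟨B, hB, hsame, hsep⟩
  have h0 : latPt 0 0 ∈ ⋃ i, B i := hB ▸ latPt_mem_disks 0 0
  have h1 : latPt 1 0 ∈ ⋃ i, B i := hB ▸ latPt_mem_disks 1 0
  have h2 : latPt 2 0 ∈ ⋃ i, B i := hB ▸ latPt_mem_disks 2 0
  obtain ⟨i0, hi0⟩ := mem_iUnion.mp h0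
  obtain ⟨i1, hi1⟩ := mem_iUnion.mp h1
  obtain ⟨i2, hi2⟩ := mem_iUnion.mp h2
  have d01 : dist (latPt 0 0) (latPt 1 0) = latC := by
    rw [dist_latPt_row]; norm_num
  have d12 : dist (latPt 1 0) (latPt 2 0) = latC := by
    rw [dist_latPt_row]; norm_num
  have d02 : dist (latPt 0 0) (latPt 2 0) = 2 * latC := by
    rw [dist_latPt_row]; norm_num; ring
  have hi01 : i0 = i1 := by
    by_contra h
    have := hsep i0 i1 h _ hi0 _ hi1
    rw [d01] at this
    linarith [latC_lt_one]
  have hi12 : i1 = i2 := by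
    by_contra h
    have := hsep i1 i2 h _ hi1 _ hi2
    rw [d12] at this
    linarith [latC_lt_one]
  have := hsame i0 _ hi0 _ (by rw [hi01, hi12]; exact hi2)
  rw [d02] at this
  have h2c : 1 < 2 * latC := by unfold latC; nlinarith [sqrt2_gt]
  linarith

/- counting lemmas -/

lemma real_card_ge (a b : ℝ) : b - a - 1 ≤ ((Finset.Icc ⌈a⌉ ⌊b⌋).card : ℝ) := by
  rcases le_or_gt ⌈a⌉ ⌊b⌋ with h | h
  · rw [Int.card_Icc]
    have hn : (((⌊b⌋ + 1 - ⌈a⌉).toNat : ℕ) : ℝ) = (⌊b⌋:ℝ) + 1 - (⌈a⌉:ℝ) := by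
      have := Int.toNat_of_nonneg (by omega : (0:ℤ) ≤ ⌊b⌋ + 1 - ⌈a⌉)
      exact_mod_cast congrArg (fun z : ℤ => (z : ℝ)) this
    rw [hn]
    have h1 := Int.sub_one_lt_floor b
    have h2 := Int.ceil_lt_add_one a
    linarith
  · rw [Finset.Icc_eq_empty (not_le.mpr h)]
    simp only [Finset.card_empty, Nat.cast_zero]
    have h1 := Int.lt_floor_add_one b
    have h2 := Int.ceil_lt_add_one a
    have h3 : (⌊b⌋:ℝ) + 1 ≤ (⌈a⌉:ℝ) := by exact_mod_cast (by omega : ⌊b⌋ + 1 ≤ ⌈a⌉)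
    linarith

lemma real_card_le (a b : ℝ) (hle : a ≤ b) :
    ((Finset.Icc ⌈a⌉ ⌊b⌋).card : ℝ) ≤ b - a + 1 := by
  rcases le_or_gt ⌈a⌉ ⌊b⌋ with h | h
  · rw [Int.card_Icc]
    have hn : (((⌊b⌋ + 1 - ⌈a⌉).toNat : ℕ) : ℝ) = (⌊b⌋:ℝ) + 1 - (⌈a⌉:ℝ) := by
      have := Int.toNat_of_nonneg (by omega : (0:ℤ) ≤ ⌊b⌋ + 1 - ⌈a⌉)
      exact_mod_cast congrArg (fun z : ℤ => (z : ℝ)) this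
    rw [hn]
    have h1 := Int.floor_le b
    have h2 := Int.le_ceil a
    linarith
  · rw [Finset.Icc_eq_empty (not_le.mpr h)]
    simp only [Finset.card_empty, Nat.cast_zero]
    linarith

lemma mem_Icc_of_abs {a : ℤ} {t u : ℝ} (h : |latC * a - t| ≤ u) :
    a ∈ Finset.Icc ⌈(t - u)/latC⌉ ⌊(t + u)/latC⌋ := by
  rw [abs_le] at h
  rw [Finset.mem_Icc]
  constructor
  · exact Int.ceil_le.mpr ((div_le_iff₀ latC_pos).mpr (by nlinarith [h.1]))
  · exact Int.le_floor.mpr ((le_div_iff₀ latC_pos).mpr (by nlinarith [h.2]))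

lemma abs_of_mem_Icc {a : ℤ} {t u : ℝ}
    (h : a ∈ Finset.Icc ⌈(t - u)/latC⌉ ⌊(t + u)/latC⌋) : |latC * a - t| ≤ u := by
  rw [Finset.mem_Icc] at h
  have h1 : (t - u)/latC ≤ a := le_trans (Int.le_ceil _) (by exact_mod_cast h.1)
  have h2 : (a:ℝ) ≤ (t + u)/latC := le_trans (by exact_mod_cast h.2) (Int.floor_le _)
  rw [div_le_iff₀ latC_pos] at h1
  rw [le_div_iff₀ latC_pos] at h2
  rw [abs_le]
  constructor <;> nlinarith

lemma volume_ball_r (x : EuclideanSpace ℝ (Fin 2)) (r : ℝ) (hr : 0 ≤ r) :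
    volume (ball x r) = ENNReal.ofReal (Real.pi * r^2) := by
  rw [EuclideanSpace.volume_ball]
  simp only [Fintype.card_fin]
  rw [show ((2:ℕ):ℝ)/2 + 1 = 2 by norm_num, Real.Gamma_two, div_one,
    Real.sq_sqrt Real.pi_nonneg, ← ENNReal.ofReal_pow hr,
    ← ENNReal.ofReal_mul (by positivity), mul_comm]

lemma dist_latPt_ge {q q' : ℤ × ℤ} (h : q ≠ q') :
    latC ≤ dist (latPt q.1 q.2) (latPt q'.1 q'.2) := by
  have hsq := dist_latPt_sq q.1 q.2 q'.1 q'.2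
  have h1 : (1:ℤ) ≤ (q.1 - q'.1)^2 + (q.2 - q'.2)^2 := by
    by_contra hlt
    push_neg at hlt
    have hm := sq_nonneg (q.1 - q'.1)
    have hn := sq_nonneg (q.2 - q'.2)
    exact h (Prod.ext (by nlinarith) (by nlinarith))
  have h1' : (1:ℝ) ≤ ((q.1 - q'.1 : ℤ) : ℝ)^2 + ((q.2 - q'.2 : ℤ) : ℝ)^2 := by
    exact_mod_cast h1
  have hsq2 : latC^2 ≤ dist (latPt q.1 q.2) (latPt q'.1 q'.2) ^ 2 := by
    rw [hsq]; nlinarith [latC_pos]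
  calc latC = Real.sqrt (latC ^ 2) := (Real.sqrt_sq latC_pos.le).symm
    _ ≤ Real.sqrt (dist (latPt q.1 q.2) (latPt q'.1 q'.2) ^ 2) := Real.sqrt_le_sqrt hsq2
    _ = dist (latPt q.1 q.2) (latPt q'.1 q'.2) := Real.sqrt_sq dist_nonneg

/-- the finite window of lattice indices -/
def latWin (p : EuclideanSpace ℝ (Fin 2)) (u : ℝ) : Finset (ℤ × ℤ) :=
  (Finset.Icc ⌈(p 0 - u)/latC⌉ ⌊(p 0 + u)/latC⌋) ×ˢ
  (Finset.Icc ⌈(p 1 - u)/latC⌉ ⌊(p 1 + u)/latC⌋)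

set_option maxHeartbeats 1000000 in
lemma vol_upper (p : EuclideanSpace ℝ (Fin 2)) (s : ℝ) :
    volume (sqDisks ∩ cube 2 p s) ≤
      (latWin p (s + latR)).card • ENNReal.ofReal (Real.pi * latR^2) := by
  have hsub : sqDisks ∩ cube 2 p s ⊆
      ⋃ q ∈ latWin p (s + latR), ball (latPt q.1 q.2) latR := by
    rintro x ⟨hxd, hxc⟩
    obtain ⟨z, hz, hxz⟩ := mem_sqDisks.mp hxd
    obtain ⟨a, b, rfl⟩ := (mem_sqLattice z).mp hz
    have hxc' : ∀ i, |x i - p i| ≤ s := hxc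
    refine mem_iUnion₂.mpr ⟨(a, b), ?_, hxz⟩
    rw [latWin, Finset.mem_product]
    constructor
    · apply mem_Icc_of_abs
      have := abs_coord_le_dist (latPt a b) x 0
      rw [latPt_apply0] at this
      rw [mem_ball, dist_comm] at hxz
      calc |latC * a - p 0| ≤ |latC * a - x 0| + |x 0 - p 0| := abs_sub_le _ _ _
        _ ≤ dist (latPt a b) x + s := add_le_add this (hxc' 0)
        _ ≤ s + latR := by linarith [hxz.le]
    · apply mem_Icc_of_abs
      have := abs_coord_le_dist (latPt a b) x 1
      rw [latPt_apply1] at this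
      rw [mem_ball, dist_comm] at hxz
      calc |latC * b - p 1| ≤ |latC * b - x 1| + |x 1 - p 1| := abs_sub_le _ _ _
        _ ≤ dist (latPt a b) x + s := add_le_add this (hxc' 1)
        _ ≤ s + latR := by linarith [hxz.le]
  calc volume (sqDisks ∩ cube 2 p s)
      ≤ volume (⋃ q ∈ latWin p (s + latR), ball (latPt q.1 q.2) latR) := measure_mono hsub
    _ ≤ ∑ q ∈ latWin p (s + latR), volume (ball (latPt q.1 q.2) latR) :=
        measure_biUnion_finset_le _ _
    _ = (latWin p (s + latR)).card • ENNReal.ofReal (Real.pi * latR^2) := by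
        rw [Finset.sum_congr rfl (fun q _ => volume_ball_r (latPt q.1 q.2) latR latR_pos.le),
          Finset.sum_const]

lemma vol_lower (p : EuclideanSpace ℝ (Fin 2)) (s : ℝ) :
    (latWin p (s - latR)).card • ENNReal.ofReal (Real.pi * latR^2) ≤
      volume (sqDisks ∩ cube 2 p s) := by
  have hsub : ⋃ q ∈ latWin p (s - latR), ball (latPt q.1 q.2) latR ⊆
      sqDisks ∩ cube 2 p s := by
    intro x hx
    rw [mem_iUnion₂] at hx
    obtain ⟨q, hq, hxq⟩ := hx
    rw [latWin, Finset.mem_product] at hq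
    have ha := abs_of_mem_Icc hq.1
    have hb := abs_of_mem_Icc hq.2
    rw [mem_ball] at hxq
    refine ⟨mem_sqDisks.mpr ⟨latPt q.1 q.2, latPt_mem _ _, mem_ball.mpr hxq⟩, ?_⟩
    intro i
    have hd0 := abs_coord_le_dist x (latPt q.1 q.2) i
    fin_cases i
    · show |x 0 - p 0| ≤ s
      have h0 := abs_coord_le_dist x (latPt q.1 q.2) 0
      rw [latPt_apply0] at h0
      calc |x 0 - p 0| ≤ |x 0 - latC * q.1| + |latC * q.1 - p 0| := abs_sub_le _ _ _
        _ ≤ dist x (latPt q.1 q.2) + (s - latR) := add_le_add h0 ha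
        _ ≤ s := by linarith [hxq.le]
    · show |x 1 - p 1| ≤ s
      have h1 := abs_coord_le_dist x (latPt q.1 q.2) 1
      rw [latPt_apply1] at h1
      calc |x 1 - p 1| ≤ |x 1 - latC * q.2| + |latC * q.2 - p 1| := abs_sub_le _ _ _
        _ ≤ dist x (latPt q.1 q.2) + (s - latR) := add_le_add h1 hb
        _ ≤ s := by linarith [hxq.le]
  have hdisj : (↑(latWin p (s - latR)) : Set (ℤ × ℤ)).PairwiseDisjoint
      (fun q => ball (latPt q.1 q.2) latR) := by
    intro q _ q' _ hne
    apply ball_disjoint_ball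
    calc latR + latR ≤ latC := by linarith [two_latR_lt_latC]
      _ ≤ dist (latPt q.1 q.2) (latPt q'.1 q'.2) := dist_latPt_ge hne
  calc (latWin p (s - latR)).card • ENNReal.ofReal (Real.pi * latR^2)
      = ∑ q ∈ latWin p (s - latR), volume (ball (latPt q.1 q.2) latR) := by
        rw [Finset.sum_congr rfl (fun q _ => volume_ball_r (latPt q.1 q.2) latR latR_pos.le),
          Finset.sum_const]
    _ = volume (⋃ q ∈ latWin p (s - latR), ball (latPt q.1 q.2) latR) :=
        (measure_biUnion_finset hdisj (fun _ _ => measurableSet_ball)).symm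
    _ ≤ volume (sqDisks ∩ cube 2 p s) := measure_mono hsub

lemma latWin_card_le (p : EuclideanSpace ℝ (Fin 2)) {u : ℝ} (hu : 0 ≤ u) :
    ((latWin p u).card : ℝ) ≤ (2*u/latC + 1)^2 := by
  rw [latWin, Finset.card_product]
  push_cast
  have hB : (0:ℝ) ≤ 2*u/latC + 1 :=
    add_nonneg (div_nonneg (by linarith) latC_pos.le) zero_le_one
  have key : ∀ t : ℝ, ((Finset.Icc ⌈(t - u)/latC⌉ ⌊(t + u)/latC⌋).card : ℝ) ≤ 2*u/latC + 1 := by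
    intro t
    have hle : (t - u)/latC ≤ (t + u)/latC := by
      apply div_le_div_of_nonneg_right (by linarith) latC_pos.le |>.trans_eq rfl
    have := real_card_le ((t - u)/latC) ((t + u)/latC) hle
    have he : (t + u)/latC - (t - u)/latC + 1 = 2*u/latC + 1 := by
      field_simp; ring
    linarith [he ▸ this]
  have h0 := key (p 0)
  have h1 := key (p 1)
  have hn1 : (0:ℝ) ≤ ((Finset.Icc ⌈(p 1 - u)/latC⌉ ⌊(p 1 + u)/latC⌋).card : ℝ) :=
    Nat.cast_nonneg _
  nlinarith

lemma latWin_card_ge (p : EuclideanSpace ℝ (Fin 2)) {u : ℝ} (hu : 1 ≤ u) :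
    (2*u/latC - 1)^2 ≤ ((latWin p u).card : ℝ) := by
  rw [latWin, Finset.card_product]
  push_cast
  have hB : (0:ℝ) ≤ 2*u/latC - 1 := by
    rw [sub_nonneg, le_div_iff₀ latC_pos]
    nlinarith [latC_lt_one, latC_pos]
  have key : ∀ t : ℝ, 2*u/latC - 1 ≤ ((Finset.Icc ⌈(t - u)/latC⌉ ⌊(t + u)/latC⌋).card : ℝ) := by
    intro t
    have := real_card_ge ((t - u)/latC) ((t + u)/latC)
    have he : (t + u)/latC - (t - u)/latC - 1 = 2*u/latC - 1 := by
      field_simp; ring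
    linarith [he ▸ this]
  have h0 := key (p 0)
  have h1 := key (p 1)
  nlinarith

end Helpers


lemma nsmul_ofReal_toReal (n : ℕ) (v : ℝ) (hv : 0 ≤ v) :
    ((n • ENNReal.ofReal v).toReal) = n * v := by
  rw [nsmul_eq_mul, ENNReal.toReal_mul, ENNReal.toReal_natCast, ENNReal.toReal_ofReal hv]

lemma nsmul_ofReal_ne_top (n : ℕ) (v : ℝ) : n • ENNReal.ofReal v ≠ ⊤ := by
  rw [nsmul_eq_mul]
  exact ENNReal.mul_ne_top (ENNReal.natCast_ne_top n) ENNReal.ofReal_ne_top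

lemma alg_ub (s : ℝ) (hs : 0 < s) :
    (2*(s+latR)/latC + 1)^2 * (Real.pi*latR^2) / (2*s)^2
      = Real.pi * latR^2 / latC^2 * (1 + 1/(2*s))^2 := by
  have hc := latC_pos.ne'
  have hs' := hs.ne'
  have e1 : 2*(s+latR)/latC + 1 = (2*s+1)/latC := by
    field_simp
    linarith [latC_add_2latR]
  have e2 : 1 + 1/(2*s) = (2*s+1)/(2*s) := by field_simp
  rw [e1, e2]
  field_simp

lemma alg_lb (s : ℝ) (hs : 0 < s) :
    (2*(s-latR)/latC - 1)^2 * (Real.pi*latR^2) / (2*s)^2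
      = Real.pi * latR^2 / latC^2 * (1 - 1/(2*s))^2 := by
  have hc := latC_pos.ne'
  have hs' := hs.ne'
  have e1 : 2*(s-latR)/latC - 1 = (2*s-1)/latC := by
    field_simp
    linarith [latC_add_2latR]
  have e2 : 1 - 1/(2*s) = (2*s-1)/(2*s) := by field_simp
  rw [e1, e2]
  field_simp

lemma density_sqDisks : HasDensity sqDisks (Real.pi * latR ^ 2 / latC ^ 2) := by
  intro p
  have h2s : Tendsto (fun s : ℝ => 2*s) atTop atTop :=
    tendsto_id.const_mul_atTop two_pos
  have h0 : Tendsto (fun s : ℝ => 1/(2*s)) atTop (nhds 0) :=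
    tendsto_const_nhds.div_atTop h2s
  have hub : Tendsto (fun s : ℝ => Real.pi * latR^2/latC^2 * (1 + 1/(2*s))^2) atTop
      (nhds (Real.pi * latR ^ 2 / latC ^ 2)) := by
    have h1 : Tendsto (fun s : ℝ => 1 + 1/(2*s)) atTop (nhds 1) := by
      simpa using tendsto_const_nhds.add h0
    have h2 := (h1.pow 2).const_mul (Real.pi * latR^2/latC^2)
    simpa using h2
  have hlb : Tendsto (fun s : ℝ => Real.pi * latR^2/latC^2 * (1 - 1/(2*s))^2) atTop
      (nhds (Real.pi * latR ^ 2 / latC ^ 2)) := by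
    have h1 : Tendsto (fun s : ℝ => 1 - 1/(2*s)) atTop (nhds 1) := by
      simpa using tendsto_const_nhds.sub h0
    have h2 := (h1.pow 2).const_mul (Real.pi * latR^2/latC^2)
    simpa using h2
  apply tendsto_of_tendsto_of_tendsto_of_le_of_le' hlb hub
  · filter_upwards [eventually_ge_atTop (latR + 1)] with s hs
    have hs0 : 0 < s := by linarith [latR_pos]
    have hfin : volume (sqDisks ∩ cube 2 p s) ≠ ⊤ :=
      ne_top_of_le_ne_top (nsmul_ofReal_ne_top _ _) (vol_upper p s)
    have hlow' : ((latWin p (s - latR)).card : ℝ) * (Real.pi * latR^2) ≤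
        (volume (sqDisks ∩ cube 2 p s)).toReal := by
      have := ENNReal.toReal_mono hfin (vol_lower p s)
      rwa [nsmul_ofReal_toReal _ _ (by positivity)] at this
    have hcard := latWin_card_ge p (u := s - latR) (by linarith)
    have hπ : (0:ℝ) ≤ Real.pi * latR^2 := by positivity
    have step1 : (2*(s-latR)/latC - 1)^2 * (Real.pi * latR^2) ≤
        (volume (sqDisks ∩ cube 2 p s)).toReal :=
      le_trans (mul_le_mul_of_nonneg_right hcard hπ) hlow'
    calc Real.pi * latR^2/latC^2 * (1 - 1/(2*s))^2
        = (2*(s-latR)/latC - 1)^2 * (Real.pi*latR^2) / (2*s)^2 := (alg_lb s hs0).symm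
      _ ≤ (volume (sqDisks ∩ cube 2 p s)).toReal / (2*s)^2 :=
          div_le_div_of_nonneg_right step1 (by positivity) |>.trans_eq rfl
  · filter_upwards [eventually_ge_atTop (latR + 1)] with s hs
    have hs0 : 0 < s := by linarith [latR_pos]
    have hup' : (volume (sqDisks ∩ cube 2 p s)).toReal ≤
        ((latWin p (s + latR)).card : ℝ) * (Real.pi * latR^2) := by
      have := ENNReal.toReal_mono (nsmul_ofReal_ne_top _ _) (vol_upper p s)
      rwa [nsmul_ofReal_toReal _ _ (by positivity)] at this
    have hcard := latWin_card_le p (u := s + latR) (by linarith [latR_pos])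
    have hπ : (0:ℝ) ≤ Real.pi * latR^2 := by positivity
    have step1 : (volume (sqDisks ∩ cube 2 p s)).toReal ≤
        (2*(s+latR)/latC + 1)^2 * (Real.pi * latR^2) :=
      le_trans hup' (mul_le_mul_of_nonneg_right hcard hπ)
    calc (volume (sqDisks ∩ cube 2 p s)).toReal / (2*s)^2
        ≤ (2*(s+latR)/latC + 1)^2 * (Real.pi*latR^2) / (2*s)^2 :=
          div_le_div_of_nonneg_right step1 (by positivity) |>.trans_eq rfl
      _ = Real.pi * latR^2/latC^2 * (1 + 1/(2*s))^2 := alg_ub s hs0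

theorem no_block_structure_example :
    Avoids1 sqDisks ∧
    (∀ p ∈ sqLattice, ∀ q ∈ sqLattice, dist p q = latC →
      ∀ x ∈ ball p latR, ∀ y ∈ ball q latR, dist x y < 1) ∧
    (∀ p ∈ sqLattice, ∀ q ∈ sqLattice, p ≠ q → dist p q ≠ latC →
      ∀ x ∈ ball p latR, ∀ y ∈ ball q latR, 1 < dist x y) ∧
    HasDensity sqDisks (Real.pi * latR ^ 2 / latC ^ 2) ∧
    0 < Real.pi * latR ^ 2 / latC ^ 2 ∧
    ¬ HasBlockStructure sqDisks := by
  refine ⟨sqDisks_avoids, ?_, ?_, density_sqDisks, ?_, sqDisks_no_block⟩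
  · intro p _ q _ hd x hx y hy
    exact adj_lt_one hd hx hy
  · intro p hp q hq hne hd x hx y hy
    exact nonadj_gt_one hp hq hne hd hx hy
  · exact div_pos (mul_pos Real.pi_pos (pow_pos latR_pos 2)) (pow_pos latC_pos 2)

end
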